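/- arXiv:1406.1530 — 4 statements merged into one kernel-verified Lean document; each statement's English description precedes it below -/
import Mathlib

section
/- Let r ≥ 3 be an integer. Then there exists a set T ⊆ [r]³ of exactly r² − r triples such that: (1) each triple in T consists of three distinct elements; (2) each i ∈ [r] appears as an element in exactly 3(r−1) triples of T; (3) for every pair of distinct i, j ∈ [r], at most 6 triples of T contain both i and j. -/
/-!
Take an idempotent Latin square `f` on `[r]`; for `r ≠ 2` one exists: the midpoint square
`(x + y) / 2` on `ℤ/r` when `r` is odd, and a prolongation of it when `r` is even. Let `T` be the
set of triples `(x, y, f x y)` with `x ≠ y`. Any two coordinates of a triple of `T` are distinct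
and determine the triple, and every pair of distinct elements occurs in every two positions:
for positions 1, 2 trivially, and for the others because rows and columns of `f` are
bijections fixing the diagonal. So `i` occurs `r - 1` times in each of the three positions, and
a triple containing `i ≠ j` is determined by the ordered pair of positions they occupy.
-/

open Finset Function

structure IsIdempotentLatinSquare {α : Type*} (f : α → α → α) : Prop where
  diag : ∀ x, f x x = x
  row_injective : ∀ x, Injective (f x)
  col_injective : ∀ y, Injective (fun x => f x y)

namespace IsIdempotentLatinSquare

variable {α β : Type*} {f : α → α → α}

lemma apply_ne_left (hf : IsIdempotentLatinSquare f) {x y : α} (hxy : x ≠ y) : f x y ≠ x :=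
  fun h => hxy (hf.row_injective x (h.trans (hf.diag x).symm)).symm

lemma apply_ne_right (hf : IsIdempotentLatinSquare f) {x y : α} (hxy : x ≠ y) : f x y ≠ y :=
  fun h => hxy (hf.col_injective y (h.trans (hf.diag y).symm))

lemma equivCongr (hf : IsIdempotentLatinSquare f) (e : α ≃ β) :
    IsIdempotentLatinSquare fun x y => e (f (e.symm x) (e.symm y)) where
  diag x := by simp [hf.diag]
  row_injective x := e.injective.comp ((hf.row_injective _).comp e.symm.injective)
  col_injective y := e.injective.comp ((hf.col_injective _).comp e.symm.injective)

end IsIdempotentLatinSquare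

lemma isIdempotentLatinSquare_add_mul {R : Type*} [CommRing R] {u : R} (hu : 2 * u = 1) :
    IsIdempotentLatinSquare fun x y : R => (x + y) * u where
  diag x := by linear_combination x * hu
  row_injective x y z h := by linear_combination 2 * h - (y - z) * hu
  col_injective y x z h := by linear_combination 2 * h - (x - z) * hu

/-- The prolongation of the midpoint square `(x + y) * u`, `u = 1 / 2`, along its transversal
`x - y = 1`: the entries of that transversal are moved to the new row and column `none`, and
replaced by `none`. -/
def midpointProlongation {R : Type*} [CommRing R] [DecidableEq R] (u : R) :
    Option R → Option R → Option R
  | none, none => none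
  | none, some y => some (y + u)
  | some x, none => some (x - u)
  | some x, some y => if x - y = 1 then none else some ((x + y) * u)

lemma isIdempotentLatinSquare_midpointProlongation {R : Type*} [CommRing R] [DecidableEq R]
    [Nontrivial R] {u : R} (hu : 2 * u = 1) : IsIdempotentLatinSquare (midpointProlongation u) where
  diag := by
    rintro (_ | x)
    · rfl
    · simp only [midpointProlongation, sub_self, zero_ne_one, if_false, Option.some.injEq]
      linear_combination x * hu
  row_injective := by
    rintro (_ | x) (_ | y) (_ | z) h <;> grind [midpointProlongation]
  col_injective := by
    rintro (_ | y) (_ | x) (_ | z) h <;> grind [midpointProlongation]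

lemma ZMod.exists_two_mul_eq_one (k : ℕ) : ∃ u : ZMod (2 * k + 1), 2 * u = 1 :=
  ⟨k + 1, by linear_combination (by exact_mod_cast ZMod.natCast_self (2 * k + 1) :
    (2 * k + 1 : ZMod (2 * k + 1)) = 0)⟩

lemma exists_isIdempotentLatinSquare_fin {n : ℕ} (hn : n ≠ 2) :
    ∃ f : Fin n → Fin n → Fin n, IsIdempotentLatinSquare f := by
  obtain ⟨k, rfl | rfl⟩ := Nat.even_or_odd' n
  · rcases k with _ | _ | k
    · exact ⟨fun x _ => x, ⟨finZeroElim, finZeroElim, finZeroElim⟩⟩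
    · exact absurd rfl hn
    · have : Fact (1 < 2 * (k + 1) + 1) := ⟨by omega⟩
      obtain ⟨u, hu⟩ := ZMod.exists_two_mul_eq_one (k + 1)
      let e : Option (ZMod (2 * (k + 1) + 1)) ≃ Fin (2 * (k + 2)) :=
        (Equiv.optionCongr (ZMod.finEquiv _).symm.toEquiv).trans (finSuccEquiv _).symm
      exact ⟨_, (isIdempotentLatinSquare_midpointProlongation hu).equivCongr e⟩
  · obtain ⟨u, hu⟩ := ZMod.exists_two_mul_eq_one k
    exact ⟨_, (isIdempotentLatinSquare_add_mul hu).equivCongr (ZMod.finEquiv _).symm.toEquiv⟩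

section OffDiagParametrization

variable {α β : Type*} {s : Finset β} {a b : β → α}

lemma card_eq_of_bijOn_offDiag [Fintype α]
    (h : Set.BijOn (fun t => (a t, b t)) s (univ.offDiag : Finset (α × α))) :
    #s = Fintype.card α ^ 2 - Fintype.card α := by
  rw [h.finsetCard_eq, offDiag_card, card_univ, sq]

lemma card_filter_eq_of_bijOn_offDiag [Fintype α] [DecidableEq α]
    (h : Set.BijOn (fun t => (a t, b t)) s (univ.offDiag : Finset (α × α))) (i : α) :
    #{t ∈ s | a t = i} = Fintype.card α - 1 := by
  rw [← card_univ, ← card_erase_of_mem (mem_univ i)]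
  refine card_nbij b (fun t ht => ?_) (fun t ht t' ht' hb => ?_) (fun y hy => ?_)
  · obtain ⟨hts, hat⟩ := mem_filter.mp (mem_coe.mp ht)
    simpa [← hat, eq_comm] using h.mapsTo hts
  · obtain ⟨ht, hat⟩ := mem_filter.mp (mem_coe.mp ht)
    obtain ⟨ht', hat'⟩ := mem_filter.mp (mem_coe.mp ht')
    exact h.injOn ht ht' (Prod.ext (hat.trans hat'.symm) hb)
  · obtain ⟨t, ht, hab⟩ := h.surjOn (by simpa [eq_comm] using hy : (i, y) ∈ univ.offDiag)
    simp only [Prod.mk.injEq] at hab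
    exact ⟨t, by simpa using ⟨ht, hab.1⟩, hab.2⟩

lemma card_filter_pair_le_two_of_injOn [DecidableEq α] (h : Set.InjOn (fun t => (a t, b t)) s)
    (i j : α) : #{t ∈ s | a t = i ∧ b t = j ∨ a t = j ∧ b t = i} ≤ 2 :=
  calc _ ≤ #{(i, j), (j, i)} := card_le_card_of_injOn _ (fun t ht => by aesop)
          (h.mono (coe_subset.mpr (filter_subset _ _)))
    _ ≤ 2 := card_le_two

end OffDiagParametrization

section LatinTriples

variable {α : Type*} [Fintype α] [DecidableEq α] {f : α → α → α}

def latinTriples (f : α → α → α) : Finset (α × α × α) :=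
  {t | t.1 ≠ t.2.1 ∧ f t.1 t.2.1 = t.2.2}

@[simp]
lemma mk_mem_latinTriples {x y z : α} :
    (x, y, z) ∈ latinTriples f ↔ x ≠ y ∧ f x y = z := by
  simp [latinTriples]

lemma bijOn_latinTriples_fst_snd :
    Set.BijOn (fun t : α × α × α => (t.1, t.2.1)) ↑(latinTriples f)
      ↑(univ.offDiag : Finset (α × α)) := by
  refine ⟨?_, ?_, fun p hp => ⟨(p.1, p.2, f p.1 p.2), by simpa using hp, rfl⟩⟩
  · rintro ⟨x, y, z⟩ ht
    simp_all
  · rintro ⟨x, y, z⟩ ht ⟨x', y', z'⟩ ht' h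
    simp_all

lemma card_latinTriples (f : α → α → α) :
    #(latinTriples f) = Fintype.card α ^ 2 - Fintype.card α :=
  card_eq_of_bijOn_offDiag bijOn_latinTriples_fst_snd

namespace IsIdempotentLatinSquare

lemma bijOn_latinTriples_snd_thd (hf : IsIdempotentLatinSquare f) :
    Set.BijOn (fun t : α × α × α => (t.2.1, t.2.2)) ↑(latinTriples f)
      ↑(univ.offDiag : Finset (α × α)) := by
  refine ⟨?_, ?_, ?_⟩
  · rintro ⟨x, y, _⟩ ht
    obtain ⟨hxy, rfl⟩ := mk_mem_latinTriples.mp ht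
    simpa using (hf.apply_ne_right hxy).symm
  · rintro ⟨x, y, _⟩ ht ⟨x', y', _⟩ ht' h
    obtain ⟨-, rfl⟩ := mk_mem_latinTriples.mp ht
    obtain ⟨-, rfl⟩ := mk_mem_latinTriples.mp ht'
    obtain ⟨rfl, h⟩ := Prod.mk.inj h
    simp [hf.col_injective y h]
  · rintro ⟨y, z⟩ hyz
    obtain ⟨x, rfl⟩ := (Finite.injective_iff_surjective.mp (hf.col_injective y)) z
    refine ⟨(x, y, f x y), mk_mem_latinTriples.mpr ⟨?_, rfl⟩, rfl⟩
    rintro rfl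
    simp [hf.diag] at hyz

lemma bijOn_latinTriples_thd_fst (hf : IsIdempotentLatinSquare f) :
    Set.BijOn (fun t : α × α × α => (t.2.2, t.1)) ↑(latinTriples f)
      ↑(univ.offDiag : Finset (α × α)) := by
  refine ⟨?_, ?_, ?_⟩
  · rintro ⟨x, y, _⟩ ht
    obtain ⟨hxy, rfl⟩ := mk_mem_latinTriples.mp ht
    simpa using hf.apply_ne_left hxy
  · rintro ⟨x, y, _⟩ ht ⟨x', y', _⟩ ht' h
    obtain ⟨-, rfl⟩ := mk_mem_latinTriples.mp ht
    obtain ⟨-, rfl⟩ := mk_mem_latinTriples.mp ht'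
    obtain ⟨h, rfl⟩ := Prod.mk.inj h
    simp [hf.row_injective x h]
  · rintro ⟨z, x⟩ hzx
    obtain ⟨y, rfl⟩ := (Finite.injective_iff_surjective.mp (hf.row_injective x)) z
    refine ⟨(x, y, f x y), mk_mem_latinTriples.mpr ⟨?_, rfl⟩, rfl⟩
    rintro rfl
    simp [hf.diag] at hzx

lemma ne_of_mem_latinTriples (hf : IsIdempotentLatinSquare f) {t : α × α × α}
    (ht : t ∈ latinTriples f) : t.1 ≠ t.2.1 ∧ t.1 ≠ t.2.2 ∧ t.2.1 ≠ t.2.2 := by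
  have h₁₂ := bijOn_latinTriples_fst_snd.mapsTo ht
  have h₂₃ := hf.bijOn_latinTriples_snd_thd.mapsTo ht
  have h₃₁ := hf.bijOn_latinTriples_thd_fst.mapsTo ht
  simp only [coe_offDiag, coe_univ, Set.mem_offDiag] at h₁₂ h₂₃ h₃₁
  exact ⟨h₁₂.2.2, h₃₁.2.2.symm, h₂₃.2.2⟩

lemma card_filter_latinTriples_mem (hf : IsIdempotentLatinSquare f) (i : α) :
    #{t ∈ latinTriples f | t.1 = i ∨ t.2.1 = i ∨ t.2.2 = i} = 3 * (Fintype.card α - 1) := by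
  rw [filter_or, card_union_of_disjoint (disjoint_filter.mpr fun t ht => ?_), filter_or,
    card_union_of_disjoint (disjoint_filter.mpr fun t ht => ?_),
    card_filter_eq_of_bijOn_offDiag bijOn_latinTriples_fst_snd,
    card_filter_eq_of_bijOn_offDiag hf.bijOn_latinTriples_snd_thd,
    card_filter_eq_of_bijOn_offDiag hf.bijOn_latinTriples_thd_fst]
  · ring
  all_goals grind [hf.ne_of_mem_latinTriples ht]

lemma card_filter_latinTriples_mem_mem_le (hf : IsIdempotentLatinSquare f) {i j : α}
    (hij : i ≠ j) :
    #{t ∈ latinTriples f | (t.1 = i ∨ t.2.1 = i ∨ t.2.2 = i) ∧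
      (t.1 = j ∨ t.2.1 = j ∨ t.2.2 = j)} ≤ 6 := by
  calc _ ≤ #({t ∈ latinTriples f | t.1 = i ∧ t.2.1 = j ∨ t.1 = j ∧ t.2.1 = i} ∪
          {t ∈ latinTriples f | t.2.1 = i ∧ t.2.2 = j ∨ t.2.1 = j ∧ t.2.2 = i} ∪
          {t ∈ latinTriples f | t.2.2 = i ∧ t.1 = j ∨ t.2.2 = j ∧ t.1 = i}) := by
        refine card_le_card fun t ht => ?_
        simp only [mem_union, mem_filter] at ht ⊢
        grind
    _ ≤ 2 + 2 + 2 := by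
        refine (card_union_le _ _).trans (add_le_add ((card_union_le _ _).trans
          (add_le_add ?_ ?_)) ?_) <;> apply card_filter_pair_le_two_of_injOn
        exacts [bijOn_latinTriples_fst_snd.injOn, hf.bijOn_latinTriples_snd_thd.injOn,
          hf.bijOn_latinTriples_thd_fst.injOn]

end IsIdempotentLatinSquare

end LatinTriples

theorem stmt_0 (r : ℕ) (hr : 3 ≤ r) :
    ∃ T : Finset (Fin r × Fin r × Fin r),
      T.card = r ^ 2 - r ∧
      (∀ t ∈ T, t.1 ≠ t.2.1 ∧ t.1 ≠ t.2.2 ∧ t.2.1 ≠ t.2.2) ∧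
      (∀ i : Fin r,
        (T.filter (fun t => t.1 = i ∨ t.2.1 = i ∨ t.2.2 = i)).card = 3 * (r - 1)) ∧
      (∀ i j : Fin r, i ≠ j →
        (T.filter (fun t => (t.1 = i ∨ t.2.1 = i ∨ t.2.2 = i) ∧
          (t.1 = j ∨ t.2.1 = j ∨ t.2.2 = j))).card ≤ 6) := by
  obtain ⟨f, hf⟩ := exists_isIdempotentLatinSquare_fin (n := r) (by omega)
  refine ⟨latinTriples f, ?_, fun _ => hf.ne_of_mem_latinTriples, fun i => ?_,
    fun _ _ => hf.card_filter_latinTriples_mem_mem_le⟩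
  · simpa using card_latinTriples f
  · simpa using hf.card_filter_latinTriples_mem i
end

section
/- Let A be an m × n complex matrix that is a (q,k,t)-design matrix with k > 0. Then rank(A) ≥ n − n·t·q·(q−1)/k. -/
/-!
Rescale the rows and columns of `A` by positive diagonal matrices, which changes neither the rank
nor the zero pattern, so that every column has unit `ℓ²`-norm and every row has squared norm at
most `2q/k`. Such a scaling comes from minimising, over `u ≤ 0`, the potential
`∑ⱼ log (∑ᵢ |Aᵢⱼ|² eᵘⁱ) - (q/k) ∑ᵢ uᵢ + ε‖u‖`: the design conditions make it bounded below (hence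
the minimum exists), and at a minimiser the first-order condition in each `uᵢ` bounds the `i`-th
row mass by `q/k + ε`.

For the scaled matrix `A'` the Gram matrix `M = A'ᴴA'` has unit diagonal, and the eigenvalue
form of Cauchy–Schwarz, `(tr M)² ≤ rank M · ‖M‖²_F`, gives `rank A ≥ n - (off-diagonal mass)`.
Each off-diagonal entry is a sum over at most `t` rows and each row has at most `q` nonzero
entries, so two more Cauchy–Schwarz steps bound the off-diagonal mass by
`t (1 - 1/q) · (max row mass) · n ≤ n t q (q - 1) / k`.
-/

open scoped Classical

open Finset Matrix Filter Topology
open scoped ComplexOrder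

theorem exists_ne_zero_of_card_pos {α M : Type*} [Fintype α] [Zero M] {f : α → M}
    [DecidablePred fun a => f a ≠ 0] (h : 0 < #{a | f a ≠ 0}) : ∃ a, f a ≠ 0 := by
  simpa using filter_nonempty_iff.mp (card_pos.mp h)

theorem exists_isMinOn_add_mul_norm {E : Type*} [NormedAddCommGroup E] [ProperSpace E]
    {f : E → ℝ} (hf : Continuous f) {s : Set E} (hs : IsClosed s) (hne : s.Nonempty)
    (hbdd : BddBelow (f '' s)) {δ : ℝ} (hδ : 0 < δ) :
    ∃ x ∈ s, IsMinOn (fun y => f y + δ * ‖y‖) s x := by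
  obtain ⟨x₀, hx₀⟩ := hne
  obtain ⟨L, hL⟩ := hbdd
  refine (hf.add (continuous_const.mul continuous_norm)).continuousOn.exists_isMinOn' hs hx₀ ?_
  have hfar : ∀ᶠ y in cocompact E, (f x₀ + δ * ‖x₀‖ - L) / δ ≤ ‖y‖ :=
    tendsto_norm_cocompact_atTop.eventually_ge_atTop _
  filter_upwards [hfar.filter_mono inf_le_left, mem_inf_of_right (mem_principal_self s)]
    with y hy hys
  have := hL ⟨y, hys, rfl⟩
  rw [div_le_iff₀ hδ] at hy
  simp only [Pi.add_apply, Pi.mul_apply]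
  linarith

variable {ι κ : Type*} [Fintype ι]

section Scaling

variable {B : Matrix ι κ ℝ}

noncomputable def expColSum (B : Matrix ι κ ℝ) (u : ι → ℝ) (j : κ) : ℝ :=
  ∑ i, B i j * Real.exp (u i)

theorem expColSum_pos (hB : ∀ i j, 0 ≤ B i j) {j : κ} (hj : ∃ i, B i j ≠ 0) (u : ι → ℝ) :
    0 < expColSum B u j := by
  obtain ⟨i, hi⟩ := hj
  exact sum_pos' (fun l _ => mul_nonneg (hB l j) (Real.exp_pos _).le)
    ⟨i, mem_univ _, mul_pos ((hB i j).lt_of_ne' hi) (Real.exp_pos _)⟩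

theorem log_add_le_log_expColSum (hB : ∀ i j, 0 ≤ B i j) {i : ι} {j : κ} (hij : B i j ≠ 0)
    (u : ι → ℝ) : Real.log (B i j) + u i ≤ Real.log (expColSum B u j) := by
  have hpos := (hB i j).lt_of_ne' hij
  rw [← Real.log_exp (u i), ← Real.log_mul hpos.ne' (Real.exp_pos _).ne']
  exact Real.log_le_log (by positivity) <| single_le_sum (f := fun l => B l j * Real.exp (u l))
    (fun l _ => mul_nonneg (hB l j) (Real.exp_pos _).le) (mem_univ i)

variable [Fintype κ]

noncomputable def scaledRowMass (B : Matrix ι κ ℝ) (u : ι → ℝ) (i : ι) : ℝ :=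
  ∑ j, B i j * Real.exp (u i) / expColSum B u j

/-- Its partial derivative in `u i` is `scaledRowMass B u i - c`. -/
noncomputable def scalingPotential (c : ℝ) (B : Matrix ι κ ℝ) (u : ι → ℝ) : ℝ :=
  ∑ j, Real.log (expColSum B u j) - c * ∑ i, u i

theorem continuous_scalingPotential (hB : ∀ i j, 0 ≤ B i j) (hcol : ∀ j, ∃ i, B i j ≠ 0)
    (c : ℝ) : Continuous (scalingPotential c B) := by
  unfold scalingPotential expColSum
  refine .sub (continuous_finsetSum _ fun j _ => .log (by fun_prop) fun u => ?_) (by fun_prop)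
  exact (expColSum_pos hB (hcol j) u).ne'

theorem scalingPotential_bddBelow (hB : ∀ i j, 0 ≤ B i j) {q k : ℕ} (hk : 0 < k)
    (hrow : ∀ i, #{j | B i j ≠ 0} ≤ q) (hcol : ∀ j, k ≤ #{i | B i j ≠ 0}) :
    BddBelow (scalingPotential (q / k) B '' Set.Iic 0) := by
  refine ⟨∑ j, (∑ i with B i j ≠ 0, Real.log (B i j)) / #{i | B i j ≠ 0}, ?_⟩
  rintro _ ⟨u, hu, rfl⟩
  have hk' : (0 : ℝ) < k := by exact_mod_cast hk
  -- average `log (B i j) + u i ≤ log (expColSum B u j)` over the support of column `j`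
  have hcolumn : ∀ j, (∑ i with B i j ≠ 0, Real.log (B i j)) / #{i | B i j ≠ 0}
      + (∑ i with B i j ≠ 0, u i) / k ≤ Real.log (expColSum B u j) := by
    intro j
    have hS : (k : ℝ) ≤ #{i | B i j ≠ 0} := by exact_mod_cast hcol j
    have hSpos : (0 : ℝ) < #{i | B i j ≠ 0} := hk'.trans_le hS
    have hsum : ∑ i with B i j ≠ 0, (Real.log (B i j) + u i)
        ≤ #{i | B i j ≠ 0} * Real.log (expColSum B u j) := by
      simpa using sum_le_card_nsmul _ _ _ fun i hi =>
        log_add_le_log_expColSum hB (mem_filter.mp hi).2 u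
    have hneg : ∑ i with B i j ≠ 0, u i ≤ 0 := sum_nonpos fun i _ => hu i
    rw [sum_add_distrib] at hsum
    rw [div_add_div _ _ hSpos.ne' hk'.ne', div_le_iff₀ (mul_pos hSpos hk')]
    nlinarith
  have hcount : (q : ℝ) * ∑ i, u i ≤ ∑ j, ∑ i with B i j ≠ 0, u i := by
    simp only [sum_filter]
    rw [sum_comm, mul_sum]
    refine sum_le_sum fun i _ => ?_
    rw [← sum_filter, sum_const, nsmul_eq_mul]
    exact mul_le_mul_of_nonpos_right (by exact_mod_cast hrow i) (hu i)
  have hcolumns := sum_le_sum fun j (_ : j ∈ univ) => hcolumn j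
  rw [sum_add_distrib, ← sum_div] at hcolumns
  have : (q / k : ℝ) * ∑ i, u i ≤ (∑ j, ∑ i with B i j ≠ 0, u i) / k := by
    rw [div_mul_eq_mul_div]; gcongr
  unfold scalingPotential
  linarith

theorem scalingPotential_sub_single_sub_le (hB : ∀ i j, 0 ≤ B i j)
    (hcol : ∀ j, ∃ i, B i j ≠ 0) (c : ℝ) (u : ι → ℝ) (i : ι) (σ : ℝ) :
    scalingPotential c B (u - Pi.single i σ) - scalingPotential c B u
      ≤ (Real.exp (-σ) - 1) * scaledRowMass B u i + c * σ := by
  have hcolSum : ∀ j, expColSum B (u - Pi.single i σ) j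
      = expColSum B u j + (Real.exp (-σ) - 1) * (B i j * Real.exp (u i)) := by
    intro j
    rw [← sub_eq_iff_eq_add', expColSum, expColSum, ← sum_sub_distrib, sum_eq_single i]
    · simp only [Pi.sub_apply, Pi.single_eq_same, sub_eq_add_neg, Real.exp_add]
      ring
    · intro l _ hl
      simp [Pi.single_eq_of_ne hl]
    · simp
  have hlog : ∀ j, Real.log (expColSum B (u - Pi.single i σ) j) - Real.log (expColSum B u j)
      ≤ (Real.exp (-σ) - 1) * (B i j * Real.exp (u i) / expColSum B u j) := by
    intro j
    have hpos := expColSum_pos hB (hcol j)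
    rw [← Real.log_div (hpos _).ne' (hpos _).ne']
    refine (Real.log_le_sub_one_of_pos (div_pos (hpos _) (hpos _))).trans (le_of_eq ?_)
    have hu := (hpos u).ne'
    rw [hcolSum]
    field_simp
    ring
  have hsum : ∑ l, (u - Pi.single i σ : ι → ℝ) l = ∑ l, u l - σ := by simp [sum_sub_distrib]
  have hlogs := sum_le_sum fun j (_ : j ∈ univ) => hlog j
  rw [sum_sub_distrib, ← mul_sum] at hlogs
  unfold scalingPotential scaledRowMass
  rw [hsum]
  linarith

theorem scaledRowMass_le_of_isMinOn (hB : ∀ i j, 0 ≤ B i j) (hcol : ∀ j, ∃ i, B i j ≠ 0)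
    {c δ : ℝ} (hδ : 0 ≤ δ) {u : ι → ℝ} (hu : u ∈ Set.Iic 0)
    (hmin : IsMinOn (fun v => scalingPotential c B v + δ * ‖v‖) (Set.Iic 0) u) (i : ι) :
    scaledRowMass B u i ≤ c + δ := by
  set R := scaledRowMass B u i
  have hR : 0 ≤ R := sum_nonneg fun j _ =>
    div_nonneg (mul_nonneg (hB i j) (Real.exp_pos _).le) (expColSum_pos hB (hcol j) u).le
  -- compare with the competitor `u - σ eᵢ`, then let `σ → 0⁺`
  have hstep : ∀ σ > 0, R * Real.exp (-σ) ≤ c + δ := by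
    intro σ hσ
    have hv : u - Pi.single i σ ∈ Set.Iic 0 :=
      (sub_le_self u (Pi.single_nonneg.2 hσ.le)).trans hu
    have hmin_v := isMinOn_iff.mp hmin _ hv
    have hnorm : ‖u - Pi.single i σ‖ ≤ ‖u‖ + σ :=
      (norm_sub_le _ _).trans (by rw [Pi.norm_single, Real.norm_of_nonneg hσ.le])
    have hpot := scalingPotential_sub_single_sub_le hB hcol c u i σ
    have hexp : (1 + σ) * Real.exp (-σ) ≤ 1 := by
      calc (1 + σ) * Real.exp (-σ) ≤ Real.exp σ * Real.exp (-σ) := by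
            gcongr; linarith [Real.add_one_le_exp σ]
        _ = 1 := by rw [← Real.exp_add, add_neg_cancel, Real.exp_zero]
    have : R * Real.exp (-σ) * σ ≤ (c + δ) * σ := by nlinarith
    exact le_of_mul_le_mul_right this hσ
  have hlim : Tendsto (fun σ => R * Real.exp (-σ)) (𝓝[>] 0) (𝓝 R) := by
    have hcont : Continuous fun σ => R * Real.exp (-σ) := by fun_prop
    simpa using (hcont.tendsto 0).mono_left nhdsWithin_le_nhds
  exact le_of_tendsto hlim (eventually_nhdsWithin_of_forall hstep)

theorem exists_scaledRowMass_le (hB : ∀ i j, 0 ≤ B i j) {q k : ℕ} (hk : 0 < k)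
    (hrow : ∀ i, #{j | B i j ≠ 0} ≤ q) (hcol : ∀ j, k ≤ #{i | B i j ≠ 0}) {ε : ℝ}
    (hε : 0 < ε) : ∃ u, ∀ i, scaledRowMass B u i ≤ q / k + ε := by
  have hcol' : ∀ j, ∃ i, B i j ≠ 0 := fun j => exists_ne_zero_of_card_pos (hk.trans_le (hcol j))
  obtain ⟨u, hu, hmin⟩ := exists_isMinOn_add_mul_norm (continuous_scalingPotential hB hcol' _)
    isClosed_Iic Set.nonempty_Iic (scalingPotential_bddBelow hB hk hrow hcol) hε
  exact ⟨u, scaledRowMass_le_of_isMinOn hB hcol' hε.le hu hmin⟩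

end Scaling

variable [Fintype κ] {𝕜 : Type*} [RCLike 𝕜]

namespace Matrix

theorem IsHermitian.sq_re_trace_le_rank_mul {M : Matrix κ κ 𝕜} (hM : M.IsHermitian) :
    RCLike.re M.trace ^ 2 ≤ M.rank * ∑ j, ∑ k, ‖M j k‖ ^ 2 := by
  set ev := hM.eigenvalues
  have htrace : RCLike.re M.trace = ∑ i, ev i := by
    simp [hM.trace_eq_sum_eigenvalues, ev]
  have hfrob : ∑ j, ∑ k, ‖M j k‖ ^ 2 = ∑ i, ev i ^ 2 := by
    have hconj : ∀ X : Matrix κ κ 𝕜,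
        (Unitary.conjStarAlgAut 𝕜 _ hM.eigenvectorUnitary X).trace = X.trace := by
      intro X
      rw [Unitary.conjStarAlgAut_apply, trace_mul_cycle, Unitary.coe_star_mul_self, one_mul]
    have hsq : (M * M).trace = ∑ i, ((ev i ^ 2 : ℝ) : 𝕜) := by
      conv_lhs =>
        rw [hM.spectral_theorem, ← map_mul, hconj, diagonal_mul_diagonal, trace_diagonal]
      simp [sq, ev]
    have hentry : ∀ j k, M j k * M k j = ((‖M j k‖ ^ 2 : ℝ) : 𝕜) := fun j k => by
      rw [← hM.apply k j, RCLike.star_def, RCLike.mul_conj, RCLike.ofReal_pow]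
    simpa only [trace, diag, mul_apply, hentry, map_sum, RCLike.ofReal_re] using
      congrArg RCLike.re hsq
  have hrank : M.rank = #{i | ev i ≠ 0} := by
    rw [hM.rank_eq_card_non_zero_eigs, Fintype.card_subtype]
  rw [htrace, hfrob, hrank, ← sum_filter_ne_zero]
  calc _ ≤ (#{i | ev i ≠ 0} : ℝ) * ∑ i with ev i ≠ 0, ev i ^ 2 := sq_sum_le_card_mul_sum_sq
    _ ≤ _ := by gcongr; exact filter_subset _ _

theorem card_sub_sum_norm_sq_offDiag_le_rank (A : Matrix ι κ 𝕜)
    (hA : ∀ j, ∑ i, ‖A i j‖ ^ 2 = 1) :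
    (Fintype.card κ : ℝ) - ∑ j, ∑ k ∈ univ.erase j, ‖(Aᴴ * A) j k‖ ^ 2 ≤ A.rank := by
  set M := Aᴴ * A
  have hdiag : ∀ j, M j j = 1 := fun j => by
    simp only [M, mul_apply, conjTranspose_apply, RCLike.star_def, RCLike.conj_mul]
    exact_mod_cast hA j
  have htrace : RCLike.re M.trace = Fintype.card κ := by simp [trace, hdiag]
  have hfrob : ∑ j, ∑ k, ‖M j k‖ ^ 2
      = Fintype.card κ + ∑ j, ∑ k ∈ univ.erase j, ‖M j k‖ ^ 2 := by
    simp [hdiag]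
  have key := (isHermitian_conjTranspose_mul_self A).sq_re_trace_le_rank_mul
  rw [htrace, hfrob, rank_conjTranspose_mul_self] at key
  have hoff : 0 ≤ ∑ j, ∑ k ∈ univ.erase j, ‖M j k‖ ^ 2 := by positivity
  have hrank : (0 : ℝ) ≤ A.rank := by positivity
  nlinarith

theorem rank_diagonal_mul_mul_diagonal {R : Type*} [Field R] (A : Matrix ι κ R)
    {d₁ : ι → R} {d₂ : κ → R} (h₁ : ∀ i, d₁ i ≠ 0) (h₂ : ∀ j, d₂ j ≠ 0) :
    (diagonal d₁ * A * diagonal d₂).rank = A.rank := by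
  rw [rank_mul_eq_left_of_isUnit_det, rank_mul_eq_right_of_isUnit_det] <;>
    simp [det_diagonal, prod_ne_zero_iff, *]

end Matrix

theorem sum_sum_erase_mul_eq (a : κ → ℝ) :
    ∑ j, ∑ k ∈ univ.erase j, a j * a k = (∑ j, a j) ^ 2 - ∑ j, a j ^ 2 := by
  simp only [← mul_sum, sum_erase_eq_sub (mem_univ _), sum_sub_distrib, ← sum_mul, sq]

theorem sq_sum_sub_sum_sq_le {a : κ → ℝ} {q : ℕ} {r : ℝ} (ha : ∀ j, 0 ≤ a j) (hq : 0 < q)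
    (hsupp : #{j | a j ≠ 0} ≤ q) (hr : ∑ j, a j ≤ r) :
    (∑ j, a j) ^ 2 - ∑ j, a j ^ 2 ≤ (q - 1) / q * r * ∑ j, a j := by
  have hcs : (∑ j, a j) ^ 2 ≤ q * ∑ j, a j ^ 2 := by
    rw [← sum_filter_ne_zero]
    calc _ ≤ (#{j | a j ≠ 0} : ℝ) * ∑ j with a j ≠ 0, a j ^ 2 := sq_sum_le_card_mul_sum_sq
      _ ≤ q * ∑ j, a j ^ 2 := by gcongr; exact filter_subset _ _
  have hq' : (1 : ℝ) ≤ q := by exact_mod_cast hq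
  have hsum : 0 ≤ ∑ j, a j := sum_nonneg fun j _ => ha j
  calc (∑ j, a j) ^ 2 - ∑ j, a j ^ 2 ≤ (q - 1) / q * (∑ j, a j) ^ 2 := by
        rw [div_mul_eq_mul_div, le_div_iff₀ (by positivity)]; nlinarith
    _ ≤ (q - 1) / q * r * ∑ j, a j := by
        rw [sq, ← mul_assoc]; gcongr

theorem norm_sq_sum_star_mul_le (x y : ι → 𝕜) :
    ‖∑ i, star (x i) * y i‖ ^ 2 ≤ #{i | x i ≠ 0 ∧ y i ≠ 0} * ∑ i, ‖x i‖ ^ 2 * ‖y i‖ ^ 2 := by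
  set T : Finset ι := {i | x i ≠ 0 ∧ y i ≠ 0}
  have hsum : ∑ i, star (x i) * y i = ∑ i ∈ T, star (x i) * y i := by
    refine (sum_filter_of_ne fun i _ h => ⟨fun hx => h ?_, fun hy => h ?_⟩).symm <;> simp [*]
  calc ‖∑ i, star (x i) * y i‖ ^ 2 ≤ (∑ i ∈ T, ‖x i‖ * ‖y i‖) ^ 2 := by
        rw [hsum]; gcongr; exact (norm_sum_le _ _).trans (by simp)
    _ ≤ #T * ∑ i ∈ T, (‖x i‖ * ‖y i‖) ^ 2 := sq_sum_le_card_mul_sum_sq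
    _ ≤ #T * ∑ i, ‖x i‖ ^ 2 * ‖y i‖ ^ 2 := by
        simp_rw [mul_pow]; gcongr; exact subset_univ _

theorem sum_norm_sq_offDiag_conjTranspose_mul_self_le (A : Matrix ι κ 𝕜) {q t : ℕ} {r : ℝ}
    (hq : 0 < q) (hrow : ∀ i, #{j | A i j ≠ 0} ≤ q)
    (hpair : ∀ j k, j ≠ k → #{i | A i j ≠ 0 ∧ A i k ≠ 0} ≤ t)
    (hmass : ∀ i, ∑ j, ‖A i j‖ ^ 2 ≤ r) :
    ∑ j, ∑ k ∈ univ.erase j, ‖(Aᴴ * A) j k‖ ^ 2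
      ≤ t * ((q - 1) / q * r) * ∑ i, ∑ j, ‖A i j‖ ^ 2 := by
  calc ∑ j, ∑ k ∈ univ.erase j, ‖(Aᴴ * A) j k‖ ^ 2
      ≤ ∑ j, ∑ k ∈ univ.erase j, t * ∑ i, ‖A i j‖ ^ 2 * ‖A i k‖ ^ 2 := by
        gcongr with j _ k hk
        simp only [mul_apply, conjTranspose_apply]
        refine (norm_sq_sum_star_mul_le _ _).trans ?_
        gcongr
        exact_mod_cast hpair j k (ne_of_mem_erase hk).symm
    _ = t * ∑ i, ((∑ j, ‖A i j‖ ^ 2) ^ 2 - ∑ j, (‖A i j‖ ^ 2) ^ 2) := by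
        simp only [← sum_sum_erase_mul_eq, mul_sum]
        rw [sum_comm]
        refine sum_congr rfl fun j _ => ?_
        rw [sum_comm]
    _ ≤ t * ∑ i, ((q - 1) / q * r * ∑ j, ‖A i j‖ ^ 2) := by
        gcongr with i
        refine sq_sum_sub_sum_sq_le (fun j => by positivity) hq ?_ (hmass i)
        simpa using hrow i
    _ = t * ((q - 1) / q * r) * ∑ i, ∑ j, ‖A i j‖ ^ 2 := by
        simp only [mul_sum, mul_assoc]

theorem exists_scaling_unit_columns (A : Matrix ι κ 𝕜) {q k : ℕ} (hk : 0 < k)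
    (hrow : ∀ i, #{j | A i j ≠ 0} ≤ q) (hcol : ∀ j, k ≤ #{i | A i j ≠ 0}) {ε : ℝ}
    (hε : 0 < ε) :
    ∃ A' : Matrix ι κ 𝕜, A'.rank = A.rank ∧ (∀ i j, A' i j ≠ 0 ↔ A i j ≠ 0) ∧
      (∀ j, ∑ i, ‖A' i j‖ ^ 2 = 1) ∧ ∀ i, ∑ j, ‖A' i j‖ ^ 2 ≤ q / k + ε := by
  set B : Matrix ι κ ℝ := of fun i j => ‖A i j‖ ^ 2
  have hB : ∀ i j, 0 ≤ B i j := fun i j => sq_nonneg _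
  have hBA : ∀ i j, B i j ≠ 0 ↔ A i j ≠ 0 := by simp [B]
  obtain ⟨u, hu⟩ := exists_scaledRowMass_le hB hk (by simpa only [hBA] using hrow)
    (by simpa only [hBA] using hcol) hε
  have hpos : ∀ j, 0 < expColSum B u j := fun j => expColSum_pos hB
    (by simpa only [hBA] using exists_ne_zero_of_card_pos (hk.trans_le (hcol j))) u
  set A' := diagonal (fun i => ((√(Real.exp (u i)) : ℝ) : 𝕜)) * A *
    diagonal (fun j => ((√(expColSum B u j)⁻¹ : ℝ) : 𝕜))
  have hentry : ∀ i j, ‖A' i j‖ ^ 2 = B i j * Real.exp (u i) / expColSum B u j := fun i j => by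
    simp only [A', B, diagonal_mul, mul_diagonal, norm_mul, RCLike.norm_ofReal, mul_pow, sq_abs,
      Real.sq_sqrt (Real.exp_pos _).le, Real.sq_sqrt (inv_nonneg.2 (hpos j).le), of_apply]
    ring
  refine ⟨A', ?_, fun i j => ?_, fun j => ?_, fun i => ?_⟩
  · exact rank_diagonal_mul_mul_diagonal A
      (fun i => RCLike.ofReal_ne_zero.2 (Real.sqrt_pos.2 (Real.exp_pos _)).ne')
      (fun j => RCLike.ofReal_ne_zero.2 (Real.sqrt_pos.2 (inv_pos.2 (hpos j))).ne')
  · rw [← norm_ne_zero_iff, ← pow_ne_zero_iff two_ne_zero, hentry, ← hBA]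
    simp [(hpos j).ne']
  · simp only [hentry, ← sum_div]
    exact div_self (hpos j).ne'
  · simp only [hentry]
    exact hu i

theorem two_mul_sub_one_le_mul_sub_one (q : ℕ) : (2 : ℝ) * (q - 1) ≤ q * (q - 1) := by
  rcases q with _ | _ | q
  · norm_num
  · norm_num
  · push_cast; nlinarith

theorem stmt_1 (m n q k t : ℕ) (hk : 0 < k) (A : Matrix (Fin m) (Fin n) ℂ)
    (hrow : ∀ i : Fin m, (Finset.univ.filter (fun j => A i j ≠ 0)).card ≤ q)
    (hcol : ∀ j : Fin n, k ≤ (Finset.univ.filter (fun i => A i j ≠ 0)).card)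
    (hpair : ∀ j₁ j₂ : Fin n, j₁ ≠ j₂ →
      (Finset.univ.filter (fun i => A i j₁ ≠ 0 ∧ A i j₂ ≠ 0)).card ≤ t) :
    (n : ℝ) - n * t * q * (q - 1) / k ≤ A.rank := by
  rcases n.eq_zero_or_pos with rfl | hn
  · simp
  have hq : 0 < q := by
    obtain ⟨i, hi⟩ := exists_ne_zero_of_card_pos (hk.trans_le (hcol ⟨0, hn⟩))
    exact (card_pos.mpr ⟨⟨0, hn⟩, by simpa using hi⟩).trans_le (hrow i)
  obtain ⟨A', hrank, hsupp, hunit, hmass⟩ :=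
    exists_scaling_unit_columns A hk hrow hcol (ε := q / k) (by positivity)
  have hoff := sum_norm_sq_offDiag_conjTranspose_mul_self_le A' hq
    (by simpa only [hsupp] using hrow) (by simpa only [hsupp] using hpair) hmass
  have htotal : ∑ i, ∑ j, ‖A' i j‖ ^ 2 = n := by simp [sum_comm (γ := Fin m), hunit]
  have hbound := card_sub_sum_norm_sq_offDiag_le_rank A' hunit
  rw [hrank, Fintype.card_fin] at hbound
  rw [htotal] at hoff
  have hq' : (0 : ℝ) < q := by exact_mod_cast hq
  have : (t : ℝ) * ((q - 1) / q * (q / k + q / k)) * n ≤ n * t * q * (q - 1) / k := by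
    field_simp
    nlinarith [mul_le_mul_of_nonneg_left (two_mul_sub_one_le_mul_sub_one q) t.cast_nonneg]
  linarith
end

section
/- Let V₁, ..., Vₙ ⊂ ℝᵈ be a (δ,n)-MR configuration with |V₁| ≥ |V₂| ≥ ... ≥ |Vₙ|. Fix 0 < ε < δ and let c_ε = 1/(δ−ε). Suppose y ∈ [n] is ε-large and every index x+1, x+2, ..., y−1 is ε-small (where 0 ≤ x < y ≤ n). Then for every i with 0 ≤ i ≤ y − x − 1, ∑_{j ≥ y−i} |V_j| ≤ 2·(1+c_ε)^i · |V_y|. -/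
/-!
An `ε`-small index `k` has `|V_k| < c_ε ∑_{j > k} |V_j|`, so each step down from `y` through the
small indices multiplies the tail sum `∑_{j ≥ k} |V_j|` by at most `1 + c_ε`. At the large index `y`
the tail sum is at most `2 |V_y|`, since `∑_{j > y} |V_j| ≤ c_ε ∑_{j > y} |V_j| ≤ |V_y|`: a point of
a nonempty `V_j` has at most `|V_j| - 1` partners, which forces `δ < 1` and hence `c_ε ≥ 1`.
-/

open scoped Classical

/-- `V 1, …, V n` (indexed by `Finset.Icc 1 n`) form a `(δ, n)`-MR configuration in `ℝ^d`:
the sets are pairwise disjoint, and for every `i` and every `v ∈ V i` there are at least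
`δ * |V i|` points `u ∈ V i \ {v}` such that the line through `v` and `u` contains a third
point belonging to some `V j` with `j ≠ i`. -/
def MRConfig (d n : ℕ) (δ : ℝ) (V : ℕ → Finset (EuclideanSpace ℝ (Fin d))) : Prop :=
  (∀ i ∈ Finset.Icc 1 n, ∀ j ∈ Finset.Icc 1 n, i ≠ j → Disjoint (V i) (V j)) ∧
  ∀ i ∈ Finset.Icc 1 n, ∀ v ∈ V i,
    δ * (V i).card ≤
      (((V i).erase v).filter (fun u => ∃ j ∈ Finset.Icc 1 n, j ≠ i ∧
        ∃ w ∈ V j, w ≠ v ∧ w ≠ u ∧ Collinear ℝ ({v, u, w} : Set _))).card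

open Finset

theorem Finset.sum_Icc_le_add_sum_Icc_succ {a : ℕ → ℝ} (ha : ∀ j, 0 ≤ a j) (k n : ℕ) :
    ∑ j ∈ Icc k n, a j ≤ a k + ∑ j ∈ Icc (k + 1) n, a j := by
  rcases le_or_gt k n with hkn | hnk
  · rw [Icc_add_one_left_eq_Ioc, add_sum_Ioc_eq_sum_Icc hkn]
  · rw [Icc_eq_empty_of_lt hnk, sum_empty]
    exact add_nonneg (ha k) (sum_nonneg fun j _ => ha j)

theorem Finset.sum_Icc_sub_le_pow_mul_sum_Icc {a : ℕ → ℝ} (ha : ∀ j, 0 ≤ a j) {c : ℝ}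
    (hc : 0 ≤ c) {n x y : ℕ}
    (hsmall : ∀ k ∈ Icc (x + 1) (y - 1), a k < c * ∑ j ∈ Icc (k + 1) n, a j)
    (i : ℕ) (hi : i ≤ y - x - 1) :
    ∑ j ∈ Icc (y - i) n, a j ≤ (1 + c) ^ i * ∑ j ∈ Icc y n, a j := by
  induction i with
  | zero => simp
  | succ i ih =>
    have hk : y - (i + 1) + 1 = y - i := by omega
    have hsmall_k := hsmall (y - (i + 1)) (mem_Icc.mpr (by omega))
    rw [hk] at hsmall_k
    calc ∑ j ∈ Icc (y - (i + 1)) n, a j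
        ≤ a (y - (i + 1)) + ∑ j ∈ Icc (y - i) n, a j := by
          simpa only [hk] using sum_Icc_le_add_sum_Icc_succ ha (y - (i + 1)) n
      _ ≤ (1 + c) * ∑ j ∈ Icc (y - i) n, a j := by linarith
      _ ≤ (1 + c) * ((1 + c) ^ i * ∑ j ∈ Icc y n, a j) := by gcongr; exact ih (by omega)
      _ = (1 + c) ^ (i + 1) * ∑ j ∈ Icc y n, a j := by ring

namespace MRConfig

variable {d n : ℕ} {δ : ℝ} {V : ℕ → Finset (EuclideanSpace ℝ (Fin d))}

theorem lt_one (hMR : MRConfig d n δ V) {j : ℕ} (hj : j ∈ Icc 1 n) (hV : (V j).Nonempty) :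
    δ < 1 := by
  obtain ⟨v, hv⟩ := hV
  have hpartners : δ * (V j).card ≤ (V j).card - 1 := by
    refine (hMR.2 j hj v hv).trans ?_
    rw [← Nat.cast_pred (card_pos.mpr ⟨v, hv⟩), ← card_erase_of_mem hv]
    exact_mod_cast card_filter_le _ _
  have hcard : (0 : ℝ) < (V j).card := by exact_mod_cast card_pos.mpr ⟨v, hv⟩
  nlinarith

theorem sum_card_le_inv_mul_sum_card (hMR : MRConfig d n δ V) {ε : ℝ} (hε : 0 < ε)
    (hεδ : ε < δ) {m : ℕ} (hm : 1 ≤ m) :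
    ∑ j ∈ Icc m n, ((V j).card : ℝ) ≤ 1 / (δ - ε) * ∑ j ∈ Icc m n, ((V j).card : ℝ) := by
  by_cases hempty : ∀ j ∈ Icc m n, V j = ∅
  · rw [sum_eq_zero fun j hj => by rw [hempty j hj, card_empty, Nat.cast_zero], mul_zero]
  push Not at hempty
  obtain ⟨j, hj, hV⟩ := hempty
  have hδ := hMR.lt_one (by simp only [mem_Icc] at hj ⊢; omega) hV
  have hc : 1 ≤ 1 / (δ - ε) := by rw [le_div_iff₀ (by linarith)]; linarith
  exact le_mul_of_one_le_left (sum_nonneg fun _ _ => Nat.cast_nonneg _) hc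

end MRConfig

theorem stmt_3_general (d n : ℕ) (δ ε : ℝ) (hε : 0 < ε) (hεδ : ε < δ)
    (V : ℕ → Finset (EuclideanSpace ℝ (Fin d)))
    (hMR : MRConfig d n δ V)
    (x y : ℕ)
    -- `y` is an `ε`-large index
    (hlarge : (1 / (δ - ε)) * ∑ j ∈ Finset.Icc (y + 1) n, ((V j).card : ℝ) ≤ (V y).card)
    -- every index `x+1, …, y-1` is `ε`-small
    (hsmall : ∀ k ∈ Finset.Icc (x + 1) (y - 1),
      ((V k).card : ℝ) < (1 / (δ - ε)) * ∑ j ∈ Finset.Icc (k + 1) n, ((V j).card : ℝ))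
    (i : ℕ) (hi : i ≤ y - x - 1) :
    ∑ j ∈ Finset.Icc (y - i) n, ((V j).card : ℝ) ≤
      2 * (1 + 1 / (δ - ε)) ^ i * (V y).card := by
  have hcard : ∀ j, (0 : ℝ) ≤ (V j).card := fun _ => Nat.cast_nonneg _
  have htail : ∑ j ∈ Icc y n, ((V j).card : ℝ) ≤ 2 * (V y).card := by
    have := sum_Icc_le_add_sum_Icc_succ hcard y n
    have := hMR.sum_card_le_inv_mul_sum_card hε hεδ (m := y + 1) le_add_self
    linarith
  calc ∑ j ∈ Icc (y - i) n, ((V j).card : ℝ)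
      ≤ (1 + 1 / (δ - ε)) ^ i * ∑ j ∈ Icc y n, ((V j).card : ℝ) :=
        sum_Icc_sub_le_pow_mul_sum_Icc hcard (by have := sub_pos.mpr hεδ; positivity) hsmall i hi
    _ ≤ (1 + 1 / (δ - ε)) ^ i * (2 * (V y).card) := by gcongr
    _ = 2 * (1 + 1 / (δ - ε)) ^ i * (V y).card := by ring

theorem stmt_3 (d n : ℕ) (δ ε : ℝ) (hε : 0 < ε) (hεδ : ε < δ)
    (V : ℕ → Finset (EuclideanSpace ℝ (Fin d)))
    (hMR : MRConfig d n δ V)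
    (hmono : ∀ i ∈ Finset.Icc 1 n, ∀ j ∈ Finset.Icc 1 n, i ≤ j →
      (V j).card ≤ (V i).card)
    (x y : ℕ) (hxy : x < y) (hyn : y ≤ n)
    -- `y` is an `ε`-large index
    (hlarge : (1 / (δ - ε)) * ∑ j ∈ Finset.Icc (y + 1) n, ((V j).card : ℝ) ≤ (V y).card)
    -- every index `x+1, …, y-1` is `ε`-small
    (hsmall : ∀ k ∈ Finset.Icc (x + 1) (y - 1),
      ((V k).card : ℝ) < (1 / (δ - ε)) * ∑ j ∈ Finset.Icc (k + 1) n, ((V j).card : ℝ))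
    (i : ℕ) (hi : i ≤ y - x - 1) :
    ∑ j ∈ Finset.Icc (y - i) n, ((V j).card : ℝ) ≤
      2 * (1 + 1 / (δ - ε)) ^ i * (V y).card :=
  stmt_3_general d n δ ε hε hεδ V hMR x y hlarge hsmall i hi
end

section
/- Let V₁, ..., Vₙ be finite sets with |V₁| ≥ ... ≥ |Vₙ|, let 0 < ε < δ < 1, c_ε = 1/(δ−ε), and suppose y is an ε-large index and each of x+1, ..., y−1 is ε-small (0 ≤ x < y ≤ n). Then |V_y| ≥ (1/(2(1+c_ε)^{y−x−1})) · ∑_{j=x+1}^{y} |V_j|. -/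
/-!
Write `T k = |V_k| + ⋯ + |V_n|`. An ε-small index `k` has `|V_k| < c_ε T(k+1)`, so
`T k ≤ (1 + c_ε) T(k+1)`; chaining this over the small indices `x+1, …, y-1` gives
`T(x+1) ≤ (1 + c_ε)^(y-x-1) T y`. Since `y` is ε-large and `c_ε ≥ 1`, `T(y+1) ≤ |V_y|`,
hence `T y ≤ 2|V_y|`, and `|V_{x+1}| + ⋯ + |V_y| ≤ T(x+1)` finishes the proof.
-/

open Finset

namespace TailSum

def tailSum (a : ℕ → ℝ) (n k : ℕ) : ℝ := ∑ j ∈ Icc k n, a j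

variable {a : ℕ → ℝ} {n : ℕ}

lemma tailSum_nonneg (ha : ∀ j, 0 ≤ a j) (k : ℕ) : 0 ≤ tailSum a n k :=
  sum_nonneg fun j _ => ha j

lemma tailSum_eq_add_tailSum_succ {k : ℕ} (hk : k ≤ n) :
    tailSum a n k = a k + tailSum a n (k + 1) := by
  rw [tailSum, tailSum, ← add_sum_Ioc_eq_sum_Icc hk, Icc_add_one_left_eq_Ioc]

lemma sum_Icc_le_tailSum (ha : ∀ j, 0 ≤ a j) {k m : ℕ} (hm : m ≤ n) :
    ∑ j ∈ Icc k m, a j ≤ tailSum a n k :=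
  sum_le_sum_of_subset_of_nonneg (Icc_subset_Icc_right hm) fun j _ _ => ha j

lemma tailSum_le_one_add_mul_tailSum_succ {c : ℝ} {k : ℕ} (hk : k ≤ n)
    (hsmall : a k ≤ c * tailSum a n (k + 1)) :
    tailSum a n k ≤ (1 + c) * tailSum a n (k + 1) := by
  rw [tailSum_eq_add_tailSum_succ hk]
  linarith

lemma tailSum_le_two_mul (ha : ∀ j, 0 ≤ a j) {c : ℝ} (hc : 1 ≤ c) {y : ℕ} (hy : y ≤ n)
    (hlarge : c * tailSum a n (y + 1) ≤ a y) :
    tailSum a n y ≤ 2 * a y := by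
  have := tailSum_nonneg (n := n) ha (y + 1)
  rw [tailSum_eq_add_tailSum_succ hy]
  nlinarith

end TailSum

lemma le_pow_mul_of_le_mul_succ {T : ℕ → ℝ} {r : ℝ} (hr : 0 ≤ r) {m d : ℕ}
    (hstep : ∀ k, m ≤ k → k < m + d → T k ≤ r * T (k + 1)) :
    T m ≤ r ^ d * T (m + d) := by
  induction d generalizing m with
  | zero => simp
  | succ d ih =>
    have htail : T (m + 1) ≤ r ^ d * T (m + 1 + d) :=
      ih fun k hk hkd => hstep k (by omega) (by omega)
    calc T m ≤ r * T (m + 1) := hstep m le_rfl (by omega)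
      _ ≤ r * (r ^ d * T (m + 1 + d)) := mul_le_mul_of_nonneg_left htail hr
      _ = r ^ (d + 1) * T (m + (d + 1)) := by
          rw [pow_succ', mul_assoc, add_right_comm m 1 d, add_assoc]

open TailSum in
lemma sum_Icc_le_two_mul_pow_mul {a : ℕ → ℝ} (ha : ∀ j, 0 ≤ a j) {n x y : ℕ} {c : ℝ}
    (hc : 1 ≤ c) (hxy : x < y) (hyn : y ≤ n)
    (hlarge : c * tailSum a n (y + 1) ≤ a y)
    (hsmall : ∀ k ∈ Icc (x + 1) (y - 1), a k < c * tailSum a n (k + 1)) :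
    ∑ j ∈ Icc (x + 1) y, a j ≤ 2 * (1 + c) ^ (y - x - 1) * a y := by
  have hchain : tailSum a n (x + 1) ≤ (1 + c) ^ (y - x - 1) * tailSum a n y := by
    have := le_pow_mul_of_le_mul_succ (T := tailSum a n) (m := x + 1) (d := y - x - 1)
      (by linarith) fun k hk hky =>
        tailSum_le_one_add_mul_tailSum_succ (by omega)
          (hsmall k (mem_Icc.mpr ⟨hk, by omega⟩)).le
    rwa [show x + 1 + (y - x - 1) = y by omega] at this
  calc ∑ j ∈ Icc (x + 1) y, a j ≤ tailSum a n (x + 1) := sum_Icc_le_tailSum ha hyn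
    _ ≤ (1 + c) ^ (y - x - 1) * tailSum a n y := hchain
    _ ≤ (1 + c) ^ (y - x - 1) * (2 * a y) :=
        mul_le_mul_of_nonneg_left (tailSum_le_two_mul ha hc hyn hlarge) (by positivity)
    _ = 2 * (1 + c) ^ (y - x - 1) * a y := by ring

theorem stmt_4_general {α : Type*} (n : ℕ) (δ ε : ℝ)
    (hε : 0 < ε) (hεδ : ε < δ) (hδ : δ < 1)
    (V : ℕ → Finset α)
    (x y : ℕ) (hxy : x < y) (hyn : y ≤ n)
    (hlarge : (1 / (δ - ε)) * ∑ j ∈ Finset.Icc (y + 1) n, ((V j).card : ℝ) ≤ (V y).card)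
    (hsmall : ∀ k ∈ Finset.Icc (x + 1) (y - 1),
      ((V k).card : ℝ) < (1 / (δ - ε)) * ∑ j ∈ Finset.Icc (k + 1) n, ((V j).card : ℝ)) :
    (1 / (2 * (1 + 1 / (δ - ε)) ^ (y - x - 1))) * ∑ j ∈ Finset.Icc (x + 1) y, ((V j).card : ℝ)
      ≤ (V y).card := by
  have hc : 1 ≤ 1 / (δ - ε) := by
    rw [le_div_iff₀ (by linarith)]
    linarith
  have hsum := sum_Icc_le_two_mul_pow_mul (a := fun j => ((V j).card : ℝ))
    (fun j => Nat.cast_nonneg _) hc hxy hyn hlarge hsmall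
  rw [one_div, inv_mul_le_iff₀ (by positivity)]
  exact hsum

theorem stmt_4 {α : Type*} [DecidableEq α] (n : ℕ) (δ ε : ℝ)
    (hε : 0 < ε) (hεδ : ε < δ) (hδ : δ < 1)
    (V : ℕ → Finset α)
    (hmono : ∀ i ∈ Finset.Icc 1 n, ∀ j ∈ Finset.Icc 1 n, i ≤ j →
      (V j).card ≤ (V i).card)
    (x y : ℕ) (hxy : x < y) (hyn : y ≤ n)
    (hlarge : (1 / (δ - ε)) * ∑ j ∈ Finset.Icc (y + 1) n, ((V j).card : ℝ) ≤ (V y).card)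
    (hsmall : ∀ k ∈ Finset.Icc (x + 1) (y - 1),
      ((V k).card : ℝ) < (1 / (δ - ε)) * ∑ j ∈ Finset.Icc (k + 1) n, ((V j).card : ℝ)) :
    (1 / (2 * (1 + 1 / (δ - ε)) ^ (y - x - 1))) * ∑ j ∈ Finset.Icc (x + 1) y, ((V j).card : ℝ)
      ≤ (V y).card :=
  stmt_4_general n δ ε hε hεδ hδ V x y hxy hyn hlarge hsmall
end
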